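/- If n is a natural number and X = ⋃_{i<n} X_i is a disjoint union of n pairwise isomorphic strongly connected binary structures, then the poset ⟨P(X), ⊆⟩ is isomorphic to the n-th direct power of the poset ⟨P(X₀), ⊆⟩. -/

import Mathlib

/-- Copies of the substructure on `S`: subsets of `S` carrying a substructure
isomorphic to the substructure on `S`. -/
def copiesIn {X : Type*} (ρ : X → X → Prop) (S : Set X) : Set (Set X) :=
  {B | B ⊆ S ∧ ∃ f : X → X, Set.BijOn f S B ∧
    ∀ a ∈ S, ∀ b ∈ S, (ρ a b ↔ ρ (f a) (f b))}

/-- The set of copies of the whole structure: images of self-embeddings. -/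
def PX {X : Type*} (ρ : X → X → Prop) : Set (Set X) :=
  {C | ∃ f : X → X, Function.Injective f ∧
    (∀ a b : X, ρ a b ↔ ρ (f a) (f b)) ∧ C = Set.range f}

/-- The substructure on `S` is strongly connected: connected, and any two of its
copies contain points related by `Δ ∪ ρ ∪ ρ⁻¹`. -/
def StronglyConnectedOn {X : Type*} (ρ : X → X → Prop) (S : Set X) : Prop :=
  (∀ a ∈ S, ∀ b ∈ S, Relation.EqvGen ρ a b) ∧
  ∀ A ∈ copiesIn ρ S, ∀ B ∈ copiesIn ρ S,
    ∃ a ∈ A, ∃ b ∈ B, a = b ∨ ρ a b ∨ ρ b a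


/-!
A self-embedding `f` of `X` maps each connected component `S i` into a single component
`S (σ i)`, and `f '' S i` is a copy of `S (σ i)`. If `σ i = σ j`, strong connectedness of
`S (σ i)` yields related points of `f '' S i` and `f '' S j`; since `f` reflects `ρ` and distinct
components are unrelated, `i = j`. So `σ` is a permutation and `range f` meets every `S j` in a
copy of `S j`. Conversely, copies `B j ⊆ S j` glue to a self-embedding with image `⋃ j, B j`.
Hence `C ↦ (C ∩ S j)_j` identifies `P(X)` with `∏ j, P(S j)`, and each factor is isomorphic to
`P(S 0)` by transport along an isomorphism `S j ≅ S 0`.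
-/

open Set Function

def OrderIso.piCongrRight {ι : Type*} {α β : ι → Type*} [∀ i, Preorder (α i)]
    [∀ i, Preorder (β i)] (e : ∀ i, α i ≃o β i) : (∀ i, α i) ≃o ∀ i, β i where
  toEquiv := Equiv.piCongrRight fun i => (e i).toEquiv
  map_rel_iff' := forall_congr' fun i => (e i).le_iff_le

section IsoOn

variable {X : Type*} {ρ : X → X → Prop}

def IsoOn (ρ : X → X → Prop) (f : X → X) (S T : Set X) : Prop :=
  BijOn f S T ∧ ∀ a ∈ S, ∀ b ∈ S, (ρ a b ↔ ρ (f a) (f b))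

lemma IsoOn.comp {f g : X → X} {S T U : Set X} (hg : IsoOn ρ g T U) (hf : IsoOn ρ f S T) :
    IsoOn ρ (g ∘ f) S U :=
  ⟨hg.1.comp hf.1, fun a ha b hb =>
    (hf.2 a ha b hb).trans (hg.2 _ (hf.1.mapsTo ha) _ (hf.1.mapsTo hb))⟩

lemma IsoOn.isoOn_image {f : X → X} {S T C : Set X} (hf : IsoOn ρ f S T) (hC : C ⊆ S) :
    IsoOn ρ f C (f '' C) :=
  ⟨(hf.1.injOn.mono hC).bijOn_image, fun a ha b hb => hf.2 a (hC ha) b (hC hb)⟩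

lemma IsoOn.exists_invOn {f : X → X} {S T : Set X} (hf : IsoOn ρ f S T) :
    ∃ g, IsoOn ρ g T S ∧ InvOn g f S T := by
  cases isEmpty_or_nonempty X
  · simp only [eq_empty_of_isEmpty S, eq_empty_of_isEmpty T]
    exact ⟨f, ⟨bijOn_empty f, by simp⟩, by simp [InvOn, LeftInvOn, RightInvOn]⟩
  have hinv := hf.1.invOn_invFunOn
  have hbij : BijOn (invFunOn f S) T S := hinv.symm.bijOn hf.1.surjOn.mapsTo_invFunOn hf.1.mapsTo
  refine ⟨invFunOn f S, ⟨hbij, fun a ha b hb => ?_⟩, hinv⟩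
  rw [hf.2 _ (hbij.mapsTo ha) _ (hbij.mapsTo hb), hinv.2 ha, hinv.2 hb]

lemma mem_copiesIn_of_isoOn {e h : X → X} {S T B : Set X} (hBT : B ⊆ T) (he : IsoOn ρ e S B)
    (hh : IsoOn ρ h T S) : B ∈ copiesIn ρ T :=
  ⟨hBT, e ∘ h, he.comp hh⟩

lemma IsoOn.image_mem_copiesIn {f : X → X} {S T C : Set X} (hf : IsoOn ρ f S T)
    (hC : C ∈ copiesIn ρ S) : f '' C ∈ copiesIn ρ T := by
  obtain ⟨hCS, e, he⟩ := hC
  obtain ⟨g, hg, -⟩ := hf.exists_invOn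
  exact mem_copiesIn_of_isoOn (image_mono hCS |>.trans hf.1.image_eq.subset)
    ((hf.isoOn_image hCS).comp he) hg

noncomputable def IsoOn.copiesInOrderIso {f : X → X} {S T : Set X} (hf : IsoOn ρ f S T) :
    {B // B ∈ copiesIn ρ S} ≃o {B // B ∈ copiesIn ρ T} :=
  let hg := hf.exists_invOn.choose_spec
  { toFun := fun C => ⟨f '' C, hf.image_mem_copiesIn C.2⟩
    invFun := fun D => ⟨hf.exists_invOn.choose '' D, hg.1.image_mem_copiesIn D.2⟩
    left_inv := fun C => Subtype.ext (hg.2.1.image_image' C.2.1)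
    right_inv := fun D => Subtype.ext (hg.2.2.image_image' D.2.1)
    map_rel_iff' := fun {C C'} => hf.1.injOn.image_subset_image_iff C.2.1 C'.2.1 }

end IsoOn

section Partition

variable {X ι : Type*} {ρ : X → X → Prop} {S : ι → Set X}

lemma StronglyConnectedOn.nonempty {T : Set X} (h : StronglyConnectedOn ρ T) : T.Nonempty := by
  have hT : T ∈ copiesIn ρ T := ⟨subset_rfl, id, bijOn_id T, fun _ _ _ _ => Iff.rfl⟩
  obtain ⟨a, ha, -⟩ := h.2 T hT T hT
  exact ⟨a, ha⟩

lemma Relation.EqvGen.map_of_rel {f : X → X} (hf : ∀ a b, ρ a b → ρ (f a) (f b)) {a b : X}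
    (h : Relation.EqvGen ρ a b) : Relation.EqvGen ρ (f a) (f b) := by
  induction h with
  | rel a b h => exact .rel _ _ (hf a b h)
  | refl a => exact .refl _
  | symm a b _ ih => exact .symm _ _ ih
  | trans a b c _ _ ih₁ ih₂ => exact .trans _ _ _ ih₁ ih₂

lemma mem_iff_mem_of_eqvGen (hcover : ∀ x, ∃! i, x ∈ S i)
    (hrel : ∀ a b, ρ a b → ∃ i, a ∈ S i ∧ b ∈ S i) {a b : X} (h : Relation.EqvGen ρ a b)
    (i : ι) : a ∈ S i ↔ b ∈ S i := by
  have hequiv : Equivalence fun a b : X => ∀ i, a ∈ S i ↔ b ∈ S i :=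
    ⟨fun _ _ => Iff.rfl, fun h i => (h i).symm, fun h h' i => (h i).trans (h' i)⟩
  refine hequiv.eqvGen_iff.1 (Relation.EqvGen.mono (fun a b hab i => ?_) _ _ h) i
  obtain ⟨k, hak, hbk⟩ := hrel a b hab
  exact ⟨fun ha => (hcover a).unique hak ha ▸ hbk, fun hb => (hcover b).unique hbk hb ▸ hak⟩

lemma eq_of_mem_of_mem_of_eqvGen (hcover : ∀ x, ∃! i, x ∈ S i)
    (hrel : ∀ a b, ρ a b → ∃ i, a ∈ S i ∧ b ∈ S i) {a b : X} {i j : ι}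
    (h : Relation.EqvGen ρ a b) (ha : a ∈ S i) (hb : b ∈ S j) : i = j :=
  (hcover b).unique ((mem_iff_mem_of_eqvGen hcover hrel h i).1 ha) hb

lemma mapsTo_of_hom (hcover : ∀ x, ∃! i, x ∈ S i)
    (hrel : ∀ a b, ρ a b → ∃ i, a ∈ S i ∧ b ∈ S i) {f : X → X}
    (hf : ∀ a b, ρ a b → ρ (f a) (f b)) {i k : ι}
    (hconn : ∀ a ∈ S i, ∀ b ∈ S i, Relation.EqvGen ρ a b) {a : X} (ha : a ∈ S i)
    (hk : f a ∈ S k) : MapsTo f (S i) (S k) := fun b hb =>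
  (mem_iff_mem_of_eqvGen hcover hrel ((hconn a ha b hb).map_of_rel hf) k).1 hk

lemma eq_of_image_mem_copiesIn (hcover : ∀ x, ∃! i, x ∈ S i)
    (hrel : ∀ a b, ρ a b → ∃ i, a ∈ S i ∧ b ∈ S i) {f : X → X} (hfinj : Injective f)
    (hf : ∀ a b, ρ a b ↔ ρ (f a) (f b)) {T : Set X} (hT : StronglyConnectedOn ρ T) {i j : ι}
    (hi : f '' S i ∈ copiesIn ρ T) (hj : f '' S j ∈ copiesIn ρ T) : i = j := by
  obtain ⟨_, ⟨a, ha, rfl⟩, _, ⟨b, hb, rfl⟩, hab⟩ := hT.2 _ hi _ hj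
  refine eq_of_mem_of_mem_of_eqvGen hcover hrel ?_ ha hb
  rcases hab with hab | hab | hab
  · rw [hfinj hab]; exact .refl b
  · exact .rel _ _ ((hf a b).2 hab)
  · exact .symm _ _ (.rel _ _ ((hf b a).2 hab))

lemma range_inter_eq_image (hcover : ∀ x, ∃! i, x ∈ S i) {f : X → X} {σ : ι → ι}
    (hσ : ∀ i, MapsTo f (S i) (S (σ i))) (hσinj : Injective σ) (i : ι) :
    range f ∩ S (σ i) = f '' S i := by
  refine Subset.antisymm ?_ fun _ ⟨x, hx, hfx⟩ => ⟨⟨x, hfx⟩, hfx ▸ hσ i hx⟩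
  rintro _ ⟨⟨x, rfl⟩, hx⟩
  obtain ⟨k, hk, -⟩ := hcover x
  obtain rfl : k = i := hσinj ((hcover (f x)).unique (hσ k hk) hx)
  exact mem_image_of_mem f hk

lemma inter_mem_copiesIn_of_mem_PX [Finite ι] (hcover : ∀ x, ∃! i, x ∈ S i)
    (hrel : ∀ a b, ρ a b → ∃ i, a ∈ S i ∧ b ∈ S i) (hsc : ∀ i, StronglyConnectedOn ρ (S i))
    (hiso : ∀ i j, ∃ f, IsoOn ρ f (S i) (S j)) {C : Set X} (hC : C ∈ PX ρ) (j : ι) :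
    C ∩ S j ∈ copiesIn ρ (S j) := by
  obtain ⟨f, hfinj, hf, rfl⟩ := hC
  have hmaps : ∀ i, ∃ k, MapsTo f (S i) (S k) := fun i => by
    obtain ⟨a, ha⟩ := (hsc i).nonempty
    obtain ⟨k, hk, -⟩ := hcover (f a)
    exact ⟨k, mapsTo_of_hom hcover hrel (fun a b => (hf a b).1) (hsc i).1 ha hk⟩
  choose σ hσ using hmaps
  have himage : ∀ i, f '' S i ∈ copiesIn ρ (S (σ i)) := fun i => by
    obtain ⟨g, hg⟩ := hiso (σ i) i
    exact mem_copiesIn_of_isoOn (hσ i).image_subset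
      ⟨hfinj.injOn.bijOn_image, fun a _ b _ => hf a b⟩ hg
  have hσinj : Injective σ := fun i i' h =>
    eq_of_image_mem_copiesIn hcover hrel hfinj hf (hsc (σ i)) (himage i) (h ▸ himage i')
  obtain ⟨i, rfl⟩ := Finite.injective_iff_surjective.1 hσinj j
  rw [range_inter_eq_image hcover hσ hσinj]
  exact himage i

lemma iUnion_mem_PX (hcover : ∀ x, ∃! i, x ∈ S i)
    (hrel : ∀ a b, ρ a b → ∃ i, a ∈ S i ∧ b ∈ S i) {B : ι → Set X}
    (hB : ∀ i, B i ∈ copiesIn ρ (S i)) : ⋃ i, B i ∈ PX ρ := by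
  choose e he using fun i => (hB i).2
  choose idx hidx using fun x => (hcover x).exists
  have hidx_eq : ∀ {x i}, x ∈ S i → idx x = i := fun hx => (hcover _).unique (hidx _) hx
  have heS : ∀ {x i}, x ∈ S i → e i x ∈ S i := fun hx => (hB _).1 ((he _).1.mapsTo hx)
  set F : X → X := fun x => e (idx x) x
  have hF : ∀ {x i}, x ∈ S i → F x = e i x := fun hx => by simp only [F, hidx_eq hx]
  have hFS : ∀ x, F x ∈ S (idx x) := fun x => heS (hidx x)
  have hFinj : Injective F := fun x y hxy => by
    have hy : y ∈ S (idx x) := by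
      rw [(hcover (F x)).unique (hFS x) (hxy ▸ hFS y)]
      exact hidx y
    exact (he _).1.injOn (hidx x) hy (hxy.trans (hF hy))
  have hFρ : ∀ a b, ρ a b ↔ ρ (F a) (F b) := fun a b => by
    by_cases hb : b ∈ S (idx a)
    · rw [hF (hidx a), hF hb]
      exact (he _).2 a (hidx a) b hb
    refine iff_of_false (fun h => hb ?_) (fun h => hb ?_)
    · obtain ⟨k, hak, hbk⟩ := hrel a b h
      rwa [hidx_eq hak]
    · obtain ⟨k, hak, hbk⟩ := hrel _ _ h
      rw [(hcover _).unique (hFS a) hak, ← (hcover _).unique (hFS b) hbk]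
      exact hidx b
  refine ⟨F, hFinj, hFρ, Subset.antisymm ?_ ?_⟩
  · simp only [iUnion_subset_iff]
    intro i y hy
    obtain ⟨x, hx, rfl⟩ := (he i).1.surjOn hy
    exact ⟨x, hF hx⟩
  · rintro _ ⟨x, rfl⟩
    exact mem_iUnion_of_mem (idx x) ((he _).1.mapsTo (hidx x))

lemma iUnion_inter_of_cover (hcover : ∀ x, ∃! i, x ∈ S i) (C : Set X) :
    ⋃ i, C ∩ S i = C := by
  rw [← inter_iUnion, iUnion_eq_univ_iff.2 fun x => (hcover x).exists, inter_univ]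

lemma iUnion_inter_eq_of_subset (hcover : ∀ x, ∃! i, x ∈ S i) {B : ι → Set X}
    (hB : ∀ i, B i ⊆ S i) (j : ι) : (⋃ i, B i) ∩ S j = B j := by
  refine Subset.antisymm ?_ fun y hy => ⟨mem_iUnion_of_mem j hy, hB j hy⟩
  rintro y ⟨hy, hyj⟩
  obtain ⟨i, hi⟩ := mem_iUnion.1 hy
  rwa [← (hcover y).unique (hB i hi) hyj]

noncomputable def PX.orderIsoPiCopiesIn [Finite ι] (hcover : ∀ x, ∃! i, x ∈ S i)
    (hrel : ∀ a b, ρ a b → ∃ i, a ∈ S i ∧ b ∈ S i) (hsc : ∀ i, StronglyConnectedOn ρ (S i))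
    (hiso : ∀ i j, ∃ f, IsoOn ρ f (S i) (S j)) :
    {C // C ∈ PX ρ} ≃o ∀ i, {B // B ∈ copiesIn ρ (S i)} where
  toFun C i := ⟨C.1 ∩ S i, inter_mem_copiesIn_of_mem_PX hcover hrel hsc hiso C.2 i⟩
  invFun B := ⟨⋃ i, (B i).1, iUnion_mem_PX hcover hrel fun i => (B i).2⟩
  left_inv C := Subtype.ext (iUnion_inter_of_cover hcover C.1)
  right_inv B := funext fun i =>
    Subtype.ext (iUnion_inter_eq_of_subset hcover (fun i => (B i).2.1) i)
  map_rel_iff' {C C'} := by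
    refine ⟨fun h => ?_, fun h i => inter_subset_inter_left _ h⟩
    change C.1 ⊆ C'.1
    rw [← iUnion_inter_of_cover hcover C.1, ← iUnion_inter_of_cover hcover C'.1]
    exact iUnion_mono h

end Partition

theorem poset_of_copies_finite_union_general {X : Type*} (n : ℕ) (hn : 0 < n)
    (ρ : X → X → Prop) (S : Fin n → Set X)
    (hcover : ∀ x : X, ∃! i, x ∈ S i)
    (hrel : ∀ a b : X, ρ a b → ∃ i, a ∈ S i ∧ b ∈ S i)
    (hsc : ∀ i, StronglyConnectedOn ρ (S i))
    (hiso : ∀ i j, ∃ f : X → X, Set.BijOn f (S i) (S j) ∧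
        ∀ a ∈ S i, ∀ b ∈ S i, (ρ a b ↔ ρ (f a) (f b))) :
    Nonempty ({C // C ∈ PX ρ} ≃o (Fin n → {B // B ∈ copiesIn ρ (S ⟨0, hn⟩)})) := by
  choose g hg using fun i => hiso i ⟨0, hn⟩
  exact ⟨(PX.orderIsoPiCopiesIn hcover hrel hsc hiso).trans
    (OrderIso.piCongrRight fun i => IsoOn.copiesInOrderIso (hg i))⟩

/-- For a disjoint union of `n` pairwise isomorphic strongly connected structures,
the poset of copies is isomorphic to the `n`-th power of the poset of copies of
the first piece. -/
theorem poset_of_copies_finite_union {X : Type*} (n : ℕ) (hn : 0 < n)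
    (ρ : X → X → Prop) (S : Fin n → Set X)
    (hcover : ∀ x : X, ∃! i, x ∈ S i)
    (hne : ∀ i, (S i).Nonempty)
    (hrel : ∀ a b : X, ρ a b → ∃ i, a ∈ S i ∧ b ∈ S i)
    (hsc : ∀ i, StronglyConnectedOn ρ (S i))
    (hiso : ∀ i j, ∃ f : X → X, Set.BijOn f (S i) (S j) ∧
        ∀ a ∈ S i, ∀ b ∈ S i, (ρ a b ↔ ρ (f a) (f b))) :
    Nonempty ({C // C ∈ PX ρ} ≃o (Fin n → {B // B ∈ copiesIn ρ (S ⟨0, hn⟩)})) :=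
  poset_of_copies_finite_union_general n hn ρ S hcover hrel hsc hiso
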